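/- arXiv:2004.13137 — 11 statements merged into one kernel-verified Lean document; each statement's English description precedes it below -/
import Mathlib

section
/- For every closed subspace X_H ⊆ X (in particular for X_H = X), there exists a unique element u_H⋆ ∈ X_H such that ⟪A u_H⋆, v_H⟫ = ⟪f, v_H⟫ for all v_H ∈ X_H. -/
open RealInnerProductSpace

/-!
The Galerkin equation on a closed subspace `K` says exactly that `u ∈ K` is a zero of the
compressed operator `u ↦ P_K (A u - f)` on the Hilbert space `K`, which inherits strong
monotonicity and Lipschitz continuity from `A` because `P_K` is a contraction that does not
change inner products with elements of `K`. A strongly monotone Lipschitz operator `B` has a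
zero since `u ↦ u - ρ B u` squares distances by at most `1 - 2ρα + ρ²L²`, which the choice
`ρ = α / L²` makes `1 - α² / L² < 1`. Two solutions `u, w` give `⟪A w - A u, w - u⟫ = 0`, so they
coincide by strong monotonicity.
-/

section StronglyMonotone

variable {E : Type*} [NormedAddCommGroup E] [InnerProductSpace ℝ E] {B : E → E} {α L : ℝ}

theorem eq_of_strongMonotone_of_inner_eq_zero (hα : 0 < α)
    (hmono : ∀ v w : E, α * ‖w - v‖ ^ 2 ≤ ⟪B w - B v, w - v⟫) {u w : E}
    (h : ⟪B w - B u, w - u⟫ = 0) : w = u := by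
  have hsq : ‖w - u‖ ^ 2 ≤ 0 := nonpos_of_mul_nonpos_right (h ▸ hmono u w) hα
  exact sub_eq_zero.mp (norm_eq_zero.mp (pow_eq_zero_iff two_ne_zero |>.mp
    (le_antisymm hsq (sq_nonneg _))))

theorem norm_sub_smul_sub_sq_le {ρ : ℝ} (hρ : 0 ≤ ρ)
    (hmono : ∀ v w : E, α * ‖w - v‖ ^ 2 ≤ ⟪B w - B v, w - v⟫)
    (hlip : ∀ v w : E, ‖B w - B v‖ ≤ L * ‖w - v‖) (u v : E) :
    ‖(u - ρ • B u) - (v - ρ • B v)‖ ^ 2 ≤ (1 - 2 * ρ * α + ρ ^ 2 * L ^ 2) * ‖u - v‖ ^ 2 := by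
  have hsplit : (u - ρ • B u) - (v - ρ • B v) = (u - v) - ρ • (B u - B v) := by module
  have hinner := mul_le_mul_of_nonneg_left (hmono v u) (by positivity : 0 ≤ 2 * ρ)
  have hnorm : ‖B u - B v‖ ^ 2 ≤ (L * ‖u - v‖) ^ 2 :=
    pow_le_pow_left₀ (norm_nonneg _) (hlip v u) 2
  rw [hsplit, norm_sub_sq_real, norm_smul, real_inner_smul_right, real_inner_comm,
    Real.norm_of_nonneg hρ]
  nlinarith [mul_le_mul_of_nonneg_left hnorm (sq_nonneg ρ)]

theorem exists_contractingWith_sub_smul (hα : 0 < α) (hαL : α ≤ L)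
    (hmono : ∀ v w : E, α * ‖w - v‖ ^ 2 ≤ ⟪B w - B v, w - v⟫)
    (hlip : ∀ v w : E, ‖B w - B v‖ ≤ L * ‖w - v‖) :
    ∃ K, ContractingWith K (fun u => u - (α / L ^ 2) • B u) := by
  have hL : 0 < L := hα.trans_le hαL
  have hc : 1 - 2 * (α / L ^ 2) * α + (α / L ^ 2) ^ 2 * L ^ 2 = 1 - α ^ 2 / L ^ 2 := by
    field_simp
    ring
  have hc0 : 0 ≤ 1 - α ^ 2 / L ^ 2 := by
    rw [sub_nonneg, div_le_one (by positivity)]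
    exact pow_le_pow_left₀ hα.le hαL 2
  have hc1 : Real.sqrt (1 - α ^ 2 / L ^ 2) < 1 := by
    rw [Real.sqrt_lt' one_pos]
    have : 0 < α ^ 2 / L ^ 2 := by positivity
    linarith
  refine ⟨⟨_, Real.sqrt_nonneg _⟩, by exact_mod_cast hc1,
    LipschitzWith.of_dist_le_mul fun u v => ?_⟩
  change _ ≤ Real.sqrt (1 - α ^ 2 / L ^ 2) * _
  rw [dist_eq_norm, dist_eq_norm, ← Real.sqrt_sq (norm_nonneg _),
    ← Real.sqrt_sq (norm_nonneg (u - v)), ← Real.sqrt_mul hc0]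
  gcongr
  exact hc ▸ norm_sub_smul_sub_sq_le (by positivity) hmono hlip u v

theorem exists_eq_zero_of_strongMonotone [CompleteSpace E] (hα : 0 < α) (hαL : α ≤ L)
    (hmono : ∀ v w : E, α * ‖w - v‖ ^ 2 ≤ ⟪B w - B v, w - v⟫)
    (hlip : ∀ v w : E, ‖B w - B v‖ ≤ L * ‖w - v‖) :
    ∃ u, B u = 0 := by
  obtain ⟨q, hq⟩ := exists_contractingWith_sub_smul hα hαL hmono hlip
  set u := ContractingWith.fixedPoint _ hq
  have hfix : u - (α / L ^ 2) • B u = u := hq.fixedPoint_isFixedPt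
  have hρ : α / L ^ 2 ≠ 0 := by have := hα.trans_le hαL; positivity
  exact ⟨_, (smul_eq_zero.mp (sub_eq_self.mp hfix)).resolve_left hρ⟩

end StronglyMonotone

namespace Submodule

variable {X : Type*} [NormedAddCommGroup X] [InnerProductSpace ℝ X] (K : Submodule ℝ X)
  [K.HasOrthogonalProjection] {A : X → X} {α L : ℝ}

theorem strongMonotone_orthogonalProjectionOnto_comp
    (hmono : ∀ v w : X, α * ‖w - v‖ ^ 2 ≤ ⟪A w - A v, w - v⟫) (v w : K) :
    α * ‖w - v‖ ^ 2 ≤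
      ⟪K.orthogonalProjectionOnto (A w) - K.orthogonalProjectionOnto (A v), w - v⟫ := by
  rw [← map_sub, inner_orthogonalProjectionOnto_eq_of_mem_right]
  exact hmono v w

theorem lipschitz_orthogonalProjectionOnto_comp
    (hlip : ∀ v w : X, ‖A w - A v‖ ≤ L * ‖w - v‖) (v w : K) :
    ‖K.orthogonalProjectionOnto (A w) - K.orthogonalProjectionOnto (A v)‖ ≤ L * ‖w - v‖ := by
  rw [← map_sub]
  exact (K.norm_orthogonalProjectionOnto_apply_le _).trans (hlip v w)

theorem orthogonalProjectionOnto_sub_eq_zero_iff (a f : X) :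
    K.orthogonalProjectionOnto (a - f) = 0 ↔ ∀ v ∈ K, ⟪a, v⟫ = ⟪f, v⟫ := by
  simp only [orthogonalProjectionOnto_eq_zero_iff, mem_orthogonal', inner_sub_left, sub_eq_zero]

end Submodule

/-- Main theorem on strongly monotone operators (existence and uniqueness of Galerkin
solutions): for every closed subspace `K` of a real Hilbert space `X` (in particular for
`K = X` itself), there is a unique `u ∈ K` with `⟪A u, v⟫ = ⟪f, v⟫` for all `v ∈ K`. -/
theorem stmt_2 {X : Type*} [NormedAddCommGroup X] [InnerProductSpace ℝ X] [CompleteSpace X]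
    (A : X → X) (f : X) (α L : ℝ) (hα : 0 < α) (hαL : α ≤ L)
    (hmono : ∀ v w : X, α * ‖w - v‖ ^ 2 ≤ ⟪A w - A v, w - v⟫)
    (hlip : ∀ v w : X, ‖A w - A v‖ ≤ L * ‖w - v‖)
    (K : Submodule ℝ X) (hK : IsClosed (K : Set X)) :
    ∃! u : X, u ∈ K ∧ ∀ v ∈ K, ⟪A u, v⟫ = ⟪f, v⟫ := by
  have : CompleteSpace K := hK.completeSpace_coe
  have hmono_f : ∀ v w : X, α * ‖w - v‖ ^ 2 ≤ ⟪(A w - f) - (A v - f), w - v⟫ := by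
    simpa only [sub_sub_sub_cancel_right] using hmono
  have hlip_f : ∀ v w : X, ‖(A w - f) - (A v - f)‖ ≤ L * ‖w - v‖ := by
    simpa only [sub_sub_sub_cancel_right] using hlip
  obtain ⟨u, hu⟩ := exists_eq_zero_of_strongMonotone hα hαL
    (K.strongMonotone_orthogonalProjectionOnto_comp hmono_f)
    (K.lipschitz_orthogonalProjectionOnto_comp hlip_f)
  have hu_sol := (K.orthogonalProjectionOnto_sub_eq_zero_iff _ _).mp hu
  refine ⟨u, ⟨u.2, hu_sol⟩, ?_⟩
  rintro w ⟨hw, hw_sol⟩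
  refine eq_of_strongMonotone_of_inner_eq_zero hα hmono ?_
  rw [inner_sub_left, hw_sol _ (K.sub_mem hw u.2), hu_sol _ (K.sub_mem hw u.2), sub_self]
end

section
/- Céa lemma: for every closed subspace X_H ⊆ X and every v_H ∈ X_H, it holds that ‖u⋆ − u_H⋆‖ ≤ (L/α)·‖u⋆ − v_H‖, where u⋆ is the exact solution on X and u_H⋆ is the Galerkin solution on X_H. -/
open RealInnerProductSpace

/-- Céa lemma for strongly monotone and Lipschitz continuous operators: if `u⋆` solves the
problem on `X` and `uH` is the Galerkin solution on a closed subspace `K`, then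
`‖u⋆ − uH‖ ≤ (L/α)·‖u⋆ − vH‖` for every `vH ∈ K`. -/
theorem stmt_3 {X : Type*} [NormedAddCommGroup X] [InnerProductSpace ℝ X] [CompleteSpace X]
    (A : X → X) (f : X) (α L : ℝ) (hα : 0 < α) (hαL : α ≤ L)
    (hmono : ∀ v w : X, α * ‖w - v‖ ^ 2 ≤ ⟪A w - A v, w - v⟫)
    (hlip : ∀ v w : X, ‖A w - A v‖ ≤ L * ‖w - v‖)
    (ustar : X) (hustar : ∀ v : X, ⟪A ustar, v⟫ = ⟪f, v⟫)
    (K : Submodule ℝ X) (hK : IsClosed (K : Set X))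
    (uH : X) (huHmem : uH ∈ K) (huH : ∀ v ∈ K, ⟪A uH, v⟫ = ⟪f, v⟫) :
    ∀ vH ∈ K, ‖ustar - uH‖ ≤ (L / α) * ‖ustar - vH‖ := by
  intro vH hvH
  -- Galerkin orthogonality
  have horth : ∀ w ∈ K, ⟪A ustar - A uH, w⟫ = 0 := by
    intro w hw
    rw [inner_sub_left, hustar w, huH w hw, sub_self]
  by_cases h0 : ustar - uH = 0
  · rw [h0, norm_zero]
    exact mul_nonneg (div_nonneg (hα.le.trans hαL) hα.le) (norm_nonneg _)
  have hn : 0 < ‖ustar - uH‖ := norm_pos_iff.mpr h0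
  have key : α * ‖ustar - uH‖ ^ 2 ≤ L * ‖ustar - uH‖ * ‖ustar - vH‖ := by
    calc α * ‖ustar - uH‖ ^ 2 ≤ ⟪A ustar - A uH, ustar - uH⟫ := hmono uH ustar
      _ = ⟪A ustar - A uH, ustar - vH⟫ + ⟪A ustar - A uH, vH - uH⟫ := by
          rw [← inner_add_right, sub_add_sub_cancel]
      _ = ⟪A ustar - A uH, ustar - vH⟫ := by
          rw [horth (vH - uH) (K.sub_mem hvH huHmem), add_zero]
      _ ≤ ‖A ustar - A uH‖ * ‖ustar - vH‖ := real_inner_le_norm _ _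
      _ ≤ L * ‖ustar - uH‖ * ‖ustar - vH‖ := by
          apply mul_le_mul_of_nonneg_right (hlip uH ustar) (norm_nonneg _)
  rw [div_mul_eq_mul_div, le_div_iff₀ hα]
  nlinarith [key]
end

section
/- Suppose P : X → ℝ is Gateaux differentiable with derivative A, i.e., for all v, w ∈ X the function t ↦ P(w + t·v) is differentiable at t = 0 with derivative ⟪A w, v⟫, and define the energy functional E(v) := P(v) − ⟪f, v⟫. Then for every closed subspace X_H ⊆ X with Galerkin solution u_H⋆ and every v_H ∈ X_H: (α/2)·‖v_H − u_H⋆‖² ≤ E(v_H) − E(u_H⋆) ≤ (L/2)·‖v_H − u_H⋆‖². -/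
/-!
Along the segment `t ↦ u + t • e` with `e = v - u`, the energy has derivative
`⟪A (u + t • e) - A u, e⟫` (the term `⟪f, e⟫` cancels by Galerkin orthogonality, as `e ∈ K`).
Strong monotonicity and the Lipschitz bound squeeze this derivative between `α t ‖e‖²` and
`L t ‖e‖²`; comparing the energy with `α t² ‖e‖² / 2` and `L t² ‖e‖² / 2` on `[0, 1]`
gives the two bounds.
-/

open RealInnerProductSpace Set

theorem HasDerivAt.line_of_hasDerivAt_zero {E F : Type*} [AddCommGroup E] [Module ℝ E]
    [NormedAddCommGroup F] [NormedSpace ℝ F] {P : E → F} {D : E → E → F}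
    (hP : ∀ w v, HasDerivAt (fun t : ℝ => P (w + t • v)) (D w v) 0) (w v : E) (t : ℝ) :
    HasDerivAt (fun s : ℝ => P (w + s • v)) (D (w + t • v) v) t := by
  have h := HasDerivAt.comp_sub_const t t ((sub_self t).symm ▸ hP (w + t • v) v)
  refine h.congr_of_eventuallyEq (Filter.Eventually.of_forall fun s => ?_)
  simp only [add_assoc, ← add_smul, add_sub_cancel]

theorem half_mul_le_sub_of_hasDerivAt {g g' : ℝ → ℝ} {c : ℝ} (hg : ∀ t, HasDerivAt g (g' t) t)
    (hc : ∀ t ∈ Ioo (0 : ℝ) 1, c * t ≤ g' t) : c / 2 ≤ g 1 - g 0 := by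
  have hφ : ∀ t, HasDerivAt (fun t => g t - c / 2 * t ^ 2) (g' t - c * t) t := fun t =>
    (hg t).fun_sub (((hasDerivAt_pow 2 t).const_mul (c / 2)).congr_deriv (by ring))
  have hmono : MonotoneOn (fun t => g t - c / 2 * t ^ 2) (Icc 0 1) := by
    refine monotoneOn_of_hasDerivWithinAt_nonneg (convex_Icc 0 1)
      (fun t _ => (hφ t).continuousAt.continuousWithinAt) (fun t _ => (hφ t).hasDerivWithinAt)
      fun t ht => ?_
    rw [interior_Icc] at ht
    linarith [hc t ht]
  have h01 : g 0 - c / 2 * 0 ^ 2 ≤ g 1 - c / 2 * 1 ^ 2 :=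
    hmono (left_mem_Icc.2 zero_le_one) (right_mem_Icc.2 zero_le_one) zero_le_one
  linarith

theorem sub_le_half_mul_of_hasDerivAt {g g' : ℝ → ℝ} {c : ℝ} (hg : ∀ t, HasDerivAt g (g' t) t)
    (hc : ∀ t ∈ Ioo (0 : ℝ) 1, g' t ≤ c * t) : g 1 - g 0 ≤ c / 2 := by
  have := half_mul_le_sub_of_hasDerivAt (fun t => (hg t).fun_neg) (c := -c)
    fun t ht => by linarith [hc t ht]
  linarith

section Operator

variable {X : Type*} [NormedAddCommGroup X] [InnerProductSpace ℝ X] {A : X → X}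

theorem mul_mul_sq_le_inner_sub_of_strongly_monotone {α : ℝ}
    (hmono : ∀ v w : X, α * ‖w - v‖ ^ 2 ≤ ⟪A w - A v, w - v⟫) (u e : X) {t : ℝ} (ht : 0 < t) :
    α * ‖e‖ ^ 2 * t ≤ ⟪A (u + t • e) - A u, e⟫ := by
  have h := hmono u (u + t • e)
  rw [add_sub_cancel_left, norm_smul, Real.norm_eq_abs, abs_of_pos ht, real_inner_smul_right] at h
  nlinarith

theorem inner_sub_le_mul_mul_sq_of_lipschitz {L : ℝ}
    (hlip : ∀ v w : X, ‖A w - A v‖ ≤ L * ‖w - v‖) (u e : X) {t : ℝ} (ht : 0 ≤ t) :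
    ⟪A (u + t • e) - A u, e⟫ ≤ L * ‖e‖ ^ 2 * t := by
  have h := hlip u (u + t • e)
  rw [add_sub_cancel_left, norm_smul, Real.norm_eq_abs, abs_of_nonneg ht] at h
  calc ⟪A (u + t • e) - A u, e⟫ ≤ ‖A (u + t • e) - A u‖ * ‖e‖ := real_inner_le_norm _ _
    _ ≤ L * (t * ‖e‖) * ‖e‖ := by gcongr
    _ = L * ‖e‖ ^ 2 * t := by ring

theorem hasDerivAt_energy_line {P E : X → ℝ} {f : X}
    (hP : ∀ w v : X, HasDerivAt (fun t : ℝ => P (w + t • v)) (⟪A w, v⟫) 0)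
    (hE : ∀ v : X, E v = P v - ⟪f, v⟫) {u e : X} (he : ⟪A u, e⟫ = ⟪f, e⟫) (t : ℝ) :
    HasDerivAt (fun s : ℝ => E (u + s • e)) (⟪A (u + t • e) - A u, e⟫) t := by
  have hlin : HasDerivAt (fun s : ℝ => ⟪f, u + s • e⟫) (⟪f, e⟫) t := by
    simpa only [inner_add_right, real_inner_smul_right, one_mul] using
      ((hasDerivAt_id' t).mul_const ⟪f, e⟫).const_add ⟪f, u⟫
  simp only [hE, inner_sub_left, he]
  exact (HasDerivAt.line_of_hasDerivAt_zero hP u e t).sub hlin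

end Operator

theorem stmt_4_general {X : Type*} [NormedAddCommGroup X] [InnerProductSpace ℝ X]
    (A : X → X) (f : X) (α L : ℝ)
    (hmono : ∀ v w : X, α * ‖w - v‖ ^ 2 ≤ ⟪A w - A v, w - v⟫)
    (hlip : ∀ v w : X, ‖A w - A v‖ ≤ L * ‖w - v‖)
    (P : X → ℝ)
    (hP : ∀ w v : X, HasDerivAt (fun t : ℝ => P (w + t • v)) (⟪A w, v⟫) 0)
    (E : X → ℝ) (hE : ∀ v : X, E v = P v - ⟪f, v⟫)
    (K : Submodule ℝ X)
    (uH : X) (huHmem : uH ∈ K) (huH : ∀ v ∈ K, ⟪A uH, v⟫ = ⟪f, v⟫) :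
    ∀ vH ∈ K,
      α / 2 * ‖vH - uH‖ ^ 2 ≤ E vH - E uH ∧ E vH - E uH ≤ L / 2 * ‖vH - uH‖ ^ 2 := by
  intro vH hvH
  have hg := hasDerivAt_energy_line hP hE (huH _ (K.sub_mem hvH huHmem))
  have h1 : E (uH + (1 : ℝ) • (vH - uH)) = E vH := by rw [one_smul, add_sub_cancel]
  have h0 : E (uH + (0 : ℝ) • (vH - uH)) = E uH := by rw [zero_smul, add_zero]
  have hlow := half_mul_le_sub_of_hasDerivAt hg
    fun t ht => mul_mul_sq_le_inner_sub_of_strongly_monotone hmono uH (vH - uH) ht.1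
  have hup := sub_le_half_mul_of_hasDerivAt hg
    fun t ht => inner_sub_le_mul_mul_sq_of_lipschitz hlip uH (vH - uH) ht.1.le
  rw [h1, h0] at hlow hup
  constructor <;> linarith

/-- Energy equivalence: if `P : X → ℝ` is Gateaux differentiable with derivative `A`
(i.e. `t ↦ P(w + t v)` has derivative `⟪A w, v⟫` at `t = 0`) and `E(v) := P(v) − ⟪f, v⟫`,
then for the Galerkin solution `uH` on a closed subspace `K` and every `vH ∈ K`:
`(α/2)‖vH − uH‖² ≤ E(vH) − E(uH) ≤ (L/2)‖vH − uH‖²`. -/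
theorem stmt_4 {X : Type*} [NormedAddCommGroup X] [InnerProductSpace ℝ X] [CompleteSpace X]
    (A : X → X) (f : X) (α L : ℝ) (hα : 0 < α) (hαL : α ≤ L)
    (hmono : ∀ v w : X, α * ‖w - v‖ ^ 2 ≤ ⟪A w - A v, w - v⟫)
    (hlip : ∀ v w : X, ‖A w - A v‖ ≤ L * ‖w - v‖)
    (P : X → ℝ)
    (hP : ∀ w v : X, HasDerivAt (fun t : ℝ => P (w + t • v)) (⟪A w, v⟫) 0)
    (E : X → ℝ) (hE : ∀ v : X, E v = P v - ⟪f, v⟫)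
    (K : Submodule ℝ X) (hK : IsClosed (K : Set X))
    (uH : X) (huHmem : uH ∈ K) (huH : ∀ v ∈ K, ⟪A uH, v⟫ = ⟪f, v⟫) :
    ∀ vH ∈ K,
      α / 2 * ‖vH - uH‖ ^ 2 ≤ E vH - E uH ∧ E vH - E uH ≤ L / 2 * ‖vH - uH‖ ^ 2 :=
  stmt_4_general A f α L hmono hlip P hP E hE K uH huHmem huH
end

section
/- Suppose P : X → ℝ is Gateaux differentiable with derivative A, i.e., for all v, w ∈ X the function t ↦ P(w + t·v) is differentiable at t = 0 with derivative ⟪A w, v⟫, and define the energy functional E(v) := P(v) − ⟪f, v⟫. Then for every closed subspace X_H ⊆ X, the Galerkin solution u_H⋆ is the unique minimizer of E over X_H: E(u_H⋆) ≤ E(v_H) for all v_H ∈ X_H, with equality if and only if v_H = u_H⋆. -/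
open RealInnerProductSpace

/-!
Along the segment `t ↦ w + t • (v - w)` the function `P` has derivative `⟪A (w + t • e), e⟫`
with `e = v - w`, and strong monotonicity of `A` makes this derivative grow at least like
`α t ‖e‖²`. Integrating over `[0, 1]` gives the strong convexity inequality
`P w + ⟪A w, v - w⟫ + α/2 ‖v - w‖² ≤ P v`. At the Galerkin solution the linear term equals
`⟪f, v - w⟫` for all `v` in the subspace, so `E v ≥ E u + α/2 ‖v - u‖²` there.
-/

theorem hasDerivAt_comp_add_smul_of_forall_hasDerivAt_zero {E F : Type*} [AddCommGroup E]
    [Module ℝ E] [NormedAddCommGroup F] [NormedSpace ℝ F] {P : E → F} {P' : E → E → F}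
    (hP : ∀ w v : E, HasDerivAt (fun t : ℝ => P (w + t • v)) (P' w v) 0) (w v : E) (s : ℝ) :
    HasDerivAt (fun t : ℝ => P (w + t • v)) (P' (w + s • v) v) s := by
  have hshift := HasDerivAt.comp_sub_const s s (by rw [sub_self]; exact hP (w + s • v) v)
  convert hshift using 2 with t
  rw [sub_smul, add_add_sub_cancel]

theorem add_inner_add_sq_le_of_strongly_monotone_gradient {X : Type*} [NormedAddCommGroup X]
    [InnerProductSpace ℝ X] {P : X → ℝ} {A : X → X} {α : ℝ}
    (hP : ∀ w v : X, HasDerivAt (fun t : ℝ => P (w + t • v)) ⟪A w, v⟫ 0)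
    (hmono : ∀ v w : X, α * ‖w - v‖ ^ 2 ≤ ⟪A w - A v, w - v⟫) (w v : X) :
    P w + ⟪A w, v - w⟫ + α / 2 * ‖v - w‖ ^ 2 ≤ P v := by
  set e := v - w
  set φ : ℝ → ℝ := fun t => P (w + t • e) - t * ⟪A w, e⟫ - α / 2 * t ^ 2 * ‖e‖ ^ 2
  have hφ : ∀ s, HasDerivAt φ (⟪A (w + s • e), e⟫ - ⟪A w, e⟫ - α * s * ‖e‖ ^ 2) s := by
    intro s
    have hquad := ((hasDerivAt_pow 2 s).const_mul (α / 2)).mul_const (‖e‖ ^ 2)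
    refine (((hasDerivAt_comp_add_smul_of_forall_hasDerivAt_zero hP w e s).sub
      ((hasDerivAt_id s).mul_const ⟪A w, e⟫)).sub hquad).congr_deriv ?_
    simp only [Nat.cast_ofNat, Nat.add_one_sub_one, pow_one]
    ring
  have hφ_nonneg : ∀ s > 0, 0 ≤ ⟪A (w + s • e), e⟫ - ⟪A w, e⟫ - α * s * ‖e‖ ^ 2 := by
    intro s hs
    have h := hmono w (w + s • e)
    rw [add_sub_cancel_left, norm_smul, Real.norm_of_nonneg hs.le, real_inner_smul_right,
      inner_sub_left] at h
    nlinarith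
  have hφ_mono : MonotoneOn φ (Set.Icc 0 1) :=
    monotoneOn_of_hasDerivWithinAt_nonneg (convex_Icc 0 1)
      (fun s _ => (hφ s).continuousAt.continuousWithinAt)
      (fun s _ => (hφ s).hasDerivWithinAt)
      (fun s hs => hφ_nonneg s (by rw [interior_Icc] at hs; exact hs.1))
  have h01 : φ 0 ≤ φ 1 := hφ_mono (by norm_num) (by norm_num) zero_le_one
  simp only [φ, zero_smul, add_zero, one_smul, e, add_sub_cancel] at h01
  linarith

theorem stmt_5_general {X : Type*} [NormedAddCommGroup X] [InnerProductSpace ℝ X]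
    (A : X → X) (f : X) (α : ℝ) (hα : 0 < α)
    (hmono : ∀ v w : X, α * ‖w - v‖ ^ 2 ≤ ⟪A w - A v, w - v⟫)
    (P : X → ℝ)
    (hP : ∀ w v : X, HasDerivAt (fun t : ℝ => P (w + t • v)) (⟪A w, v⟫) 0)
    (E : X → ℝ) (hE : ∀ v : X, E v = P v - ⟪f, v⟫)
    (K : Submodule ℝ X)
    (uH : X) (huHmem : uH ∈ K) (huH : ∀ v ∈ K, ⟪A uH, v⟫ = ⟪f, v⟫) :
    ∀ vH ∈ K, E uH ≤ E vH ∧ (E vH = E uH ↔ vH = uH) := by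
  intro vH hvH
  have hconvex := add_inner_add_sq_le_of_strongly_monotone_gradient hP hmono uH vH
  have hgalerkin := huH (vH - uH) (K.sub_mem hvH huHmem)
  have hgap : E uH + α / 2 * ‖vH - uH‖ ^ 2 ≤ E vH := by
    rw [hE, hE]
    rw [hgalerkin, inner_sub_right] at hconvex
    linarith
  have hgap_nonneg : 0 ≤ α / 2 * ‖vH - uH‖ ^ 2 := by positivity
  refine ⟨by linarith, fun hEq => ?_, fun h => h ▸ rfl⟩
  have hnorm : ‖vH - uH‖ ^ 2 = 0 := by nlinarith
  rwa [sq_eq_zero_iff, norm_eq_zero, sub_eq_zero] at hnorm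

/-- Energy minimization: if `P : X → ℝ` is Gateaux differentiable with derivative `A`
(i.e. `t ↦ P(w + t v)` has derivative `⟪A w, v⟫` at `t = 0`) and `E(v) := P(v) − ⟪f, v⟫`,
then the Galerkin solution `uH` on a closed subspace `K` is the unique minimizer of `E`
over `K`: `E(uH) ≤ E(vH)` for all `vH ∈ K`, with equality iff `vH = uH`. -/
theorem stmt_5 {X : Type*} [NormedAddCommGroup X] [InnerProductSpace ℝ X] [CompleteSpace X]
    (A : X → X) (f : X) (α L : ℝ) (hα : 0 < α) (hαL : α ≤ L)
    (hmono : ∀ v w : X, α * ‖w - v‖ ^ 2 ≤ ⟪A w - A v, w - v⟫)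
    (hlip : ∀ v w : X, ‖A w - A v‖ ≤ L * ‖w - v‖)
    (P : X → ℝ)
    (hP : ∀ w v : X, HasDerivAt (fun t : ℝ => P (w + t • v)) (⟪A w, v⟫) 0)
    (E : X → ℝ) (hE : ∀ v : X, E v = P v - ⟪f, v⟫)
    (K : Submodule ℝ X) (hK : IsClosed (K : Set X))
    (uH : X) (huHmem : uH ∈ K) (huH : ∀ v ∈ K, ⟪A uH, v⟫ = ⟪f, v⟫) :
    ∀ vH ∈ K, E uH ≤ E vH ∧ (E vH = E uH ↔ vH = uH) :=
  stmt_5_general A f α hα hmono P hP E hE K uH huHmem huH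
end

section
/- Contraction of the perturbed Banach–Picard iteration (one step): Let Y be a normed vector space. Let 0 < q_alg < 1, 0 < q_Pic < 1, λ_alg > 0, λ_Pic > 0, λ⋆ > 0 satisfy λ_alg + λ_alg/λ_Pic ≤ λ⋆ and C_alg·λ⋆ < 1, where C_alg := q_alg/(1 − q_alg), and set q_Pic' := (q_Pic + C_alg·λ⋆)/(1 − C_alg·λ⋆). Suppose u⋆, w, u', u, u_prev ∈ Y and η ≥ 0 satisfy: (i) ‖u⋆ − u'‖ ≤ q_Pic·‖u⋆ − w‖ (exact Picard step from w); (ii) ‖u' − u‖ ≤ C_alg·‖u − u_prev‖ (algebraic solver accuracy); (iii) ‖u − u_prev‖ ≤ λ_alg·(η + ‖u − w‖) (algebraic stopping criterion); (iv) λ_Pic·η < ‖u − w‖ (linearization stopping criterion not yet satisfied). Then ‖u⋆ − u‖ ≤ q_Pic'·‖u⋆ − w‖. Moreover, q_Pic' < 1 whenever λ⋆ < (1 − q_Pic)/(2·C_alg). -/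
/-- Contraction of one step of the perturbed Banach–Picard iteration (Lemma 3.2): under the
algebraic-solver accuracy and stopping criteria, the inexact iterate `u` still contracts
towards the exact discrete solution `u⋆` with factor
`q_Pic' = (q_Pic + C_alg λ⋆)/(1 − C_alg λ⋆)`, where `C_alg = q_alg/(1 − q_alg)`; moreover
`q_Pic' < 1` whenever `λ⋆ < (1 − q_Pic)/(2 C_alg)`. -/
theorem stmt_7 {Y : Type*} [NormedAddCommGroup Y] [NormedSpace ℝ Y]
    (q_alg q_Pic lamAlg lamPic lamStar : ℝ)
    (hqalg0 : 0 < q_alg) (hqalg1 : q_alg < 1)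
    (hqPic0 : 0 < q_Pic) (hqPic1 : q_Pic < 1)
    (hlamAlg : 0 < lamAlg) (hlamPic : 0 < lamPic) (hlamStar : 0 < lamStar)
    (hsum : lamAlg + lamAlg / lamPic ≤ lamStar)
    (hsmall : q_alg / (1 - q_alg) * lamStar < 1)
    (ustar w u' u u_prev : Y) (η : ℝ) (hη : 0 ≤ η)
    (h1 : ‖ustar - u'‖ ≤ q_Pic * ‖ustar - w‖)
    (h2 : ‖u' - u‖ ≤ q_alg / (1 - q_alg) * ‖u - u_prev‖)
    (h3 : ‖u - u_prev‖ ≤ lamAlg * (η + ‖u - w‖))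
    (h4 : lamPic * η < ‖u - w‖) :
    ‖ustar - u‖ ≤
        (q_Pic + q_alg / (1 - q_alg) * lamStar) / (1 - q_alg / (1 - q_alg) * lamStar) *
          ‖ustar - w‖ ∧
      (lamStar < (1 - q_Pic) / (2 * (q_alg / (1 - q_alg))) →
        (q_Pic + q_alg / (1 - q_alg) * lamStar) / (1 - q_alg / (1 - q_alg) * lamStar) < 1) := by
  set C : ℝ := q_alg / (1 - q_alg) with hC
  have hC0 : 0 < C := div_pos hqalg0 (by linarith)
  have ht0 : 0 < C * lamStar := mul_pos hC0 hlamStar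
  have hden : 0 < 1 - C * lamStar := by linarith
  -- η ≤ ‖u - w‖ / lamPic
  have hηle : η ≤ ‖u - w‖ / lamPic := by
    rw [le_div_iff₀ hlamPic]; nlinarith
  have key : ‖u' - u‖ ≤ C * lamStar * ‖u - w‖ := by
    have h5 : lamAlg * (η + ‖u - w‖) ≤ lamStar * ‖u - w‖ := by
      have : lamAlg * (η + ‖u - w‖) ≤ (lamAlg + lamAlg / lamPic) * ‖u - w‖ := by
        have h6 : lamAlg * η ≤ lamAlg / lamPic * ‖u - w‖ := by
          rw [div_mul_eq_mul_div, le_div_iff₀ hlamPic]; nlinarith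
        nlinarith
      have hnn : (0:ℝ) ≤ ‖u - w‖ := norm_nonneg _
      nlinarith
    calc ‖u' - u‖ ≤ C * ‖u - u_prev‖ := h2
      _ ≤ C * (lamAlg * (η + ‖u - w‖)) := by
          exact mul_le_mul_of_nonneg_left h3 hC0.le
      _ ≤ C * (lamStar * ‖u - w‖) := mul_le_mul_of_nonneg_left h5 hC0.le
      _ = C * lamStar * ‖u - w‖ := by ring
  have tri1 : ‖ustar - u‖ ≤ ‖ustar - u'‖ + ‖u' - u‖ := norm_sub_le_norm_sub_add_norm_sub _ _ _
  have tri2 : ‖u - w‖ ≤ ‖ustar - u‖ + ‖ustar - w‖ := by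
    have := norm_sub_le_norm_sub_add_norm_sub u ustar w
    rwa [norm_sub_rev u ustar] at this
  have main : ‖ustar - u‖ ≤
      (q_Pic + C * lamStar) / (1 - C * lamStar) * ‖ustar - w‖ := by
    rw [div_mul_eq_mul_div, le_div_iff₀ hden]
    nlinarith [norm_nonneg (ustar - u), norm_nonneg (ustar - w)]
  refine ⟨main, fun hlt => ?_⟩
  rw [div_lt_one hden]
  rw [lt_div_iff₀ (by positivity : (0:ℝ) < 2 * C)] at hlt
  nlinarith
end

section
/- Estimator equivalence under the linearization stopping criterion: Let Y be a normed vector space and η : Y → [0,∞) satisfy |η(v) − η(w)| ≤ C_stab·‖v − w‖ for all v, w ∈ Y, with C_stab > 0. Let 0 < q' < 1 and set λ⋆ := (1 − q')/(q'·C_stab). Suppose u_d, u, w ∈ Y satisfy ‖u_d − u‖ ≤ (q'/(1 − q'))·‖u − w‖ and ‖u − w‖ ≤ λ_Pic·η(u) with 0 < λ_Pic < λ⋆. Then (1 − λ_Pic/λ⋆)·η(u) ≤ η(u_d) ≤ (1 + λ_Pic/λ⋆)·η(u). -/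
/-- Estimator equivalence under the linearization stopping criterion (Lemma 3.4, eq. (3.19)):
if the estimator `η` is stable with constant `C_stab`, the computed iterate `u` satisfies
`‖u_d − u‖ ≤ (q'/(1 − q'))‖u − w‖` and the stopping criterion `‖u − w‖ ≤ λ_Pic η(u)` with
`0 < λ_Pic < λ⋆ := (1 − q')/(q' C_stab)`, then
`(1 − λ_Pic/λ⋆) η(u) ≤ η(u_d) ≤ (1 + λ_Pic/λ⋆) η(u)`. -/
theorem stmt_8 {Y : Type*} [NormedAddCommGroup Y] [NormedSpace ℝ Y]
    (C_stab q' lamPic : ℝ) (hCstab : 0 < C_stab) (hq0 : 0 < q') (hq1 : q' < 1)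
    (η : Y → ℝ) (hηnn : ∀ v : Y, 0 ≤ η v)
    (hstab : ∀ v w : Y, |η v - η w| ≤ C_stab * ‖v - w‖)
    (ud u w : Y)
    (h1 : ‖ud - u‖ ≤ q' / (1 - q') * ‖u - w‖)
    (hlam0 : 0 < lamPic) (hlam1 : lamPic < (1 - q') / (q' * C_stab))
    (h2 : ‖u - w‖ ≤ lamPic * η u) :
    (1 - lamPic / ((1 - q') / (q' * C_stab))) * η u ≤ η ud ∧
      η ud ≤ (1 + lamPic / ((1 - q') / (q' * C_stab))) * η u := by
  have h1q : 0 < 1 - q' := by linarith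
  have key : |η ud - η u| ≤ lamPic / ((1 - q') / (q' * C_stab)) * η u := by
    calc |η ud - η u| ≤ C_stab * ‖ud - u‖ := hstab ud u
      _ ≤ C_stab * (q' / (1 - q') * ‖u - w‖) := by
          exact mul_le_mul_of_nonneg_left h1 hCstab.le
      _ ≤ C_stab * (q' / (1 - q') * (lamPic * η u)) := by
          apply mul_le_mul_of_nonneg_left _ hCstab.le
          exact mul_le_mul_of_nonneg_left h2 (by positivity)
      _ = lamPic / ((1 - q') / (q' * C_stab)) * η u := by
          field_simp
  rw [abs_le] at key
  constructor <;> nlinarith [key.1, key.2]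
end

section
/- Reliability at intermediate steps: There exists a constant C' > 0, depending only on C_rel, C_stab, q_alg, and q_Pic, such that the following holds. Let 0 < q_alg < 1, 0 < q_Pic < 1, and let w, u', u, u_prev ∈ X_ℓ satisfy (i) ‖u_ℓ⋆ − u'‖ ≤ q_Pic·‖u_ℓ⋆ − w‖ and (ii) ‖u' − u‖ ≤ q_alg·‖u' − u_prev‖. Then ‖u⋆ − u‖ ≤ C'·(η(u) + ‖u − w‖ + ‖u − u_prev‖). -/
open RealInnerProductSpace

set_option maxHeartbeats 1000000

/-- Reliability at intermediate steps (Proposition 2.2, first case): there is a constant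
`C' > 0`, depending only on `C_rel`, `C_stab`, `q_alg`, and `q_Pic`, such that for any
strongly monotone and Lipschitz problem, any closed subspace with Galerkin solution `uK`,
any reliable and stable estimator `η`, and any iterates `w, u', u, u_prev` satisfying the
Picard contraction towards `uK` and the algebraic contraction, one has
`‖u⋆ − u‖ ≤ C'(η(u) + ‖u − w‖ + ‖u − u_prev‖)`. -/
theorem stmt_9 (C_rel C_stab q_alg q_Pic : ℝ)
    (hCrel : 0 < C_rel) (hCstab : 0 < C_stab)
    (hqalg0 : 0 < q_alg) (hqalg1 : q_alg < 1)
    (hqPic0 : 0 < q_Pic) (hqPic1 : q_Pic < 1) :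
    ∃ C' : ℝ, 0 < C' ∧
      ∀ (X : Type) [NormedAddCommGroup X] [InnerProductSpace ℝ X] [CompleteSpace X],
      ∀ (A : X → X) (f : X) (α L : ℝ), 0 < α → α ≤ L →
      (∀ v w : X, α * ‖w - v‖ ^ 2 ≤ ⟪A w - A v, w - v⟫) →
      (∀ v w : X, ‖A w - A v‖ ≤ L * ‖w - v‖) →
      ∀ ustar : X, (∀ v : X, ⟪A ustar, v⟫ = ⟪f, v⟫) →
      ∀ K : Submodule ℝ X, IsClosed (K : Set X) →
      ∀ uK : X, uK ∈ K → (∀ v ∈ K, ⟪A uK, v⟫ = ⟪f, v⟫) →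
      ∀ η : X → ℝ, (∀ v : X, 0 ≤ η v) →
      ‖ustar - uK‖ ≤ C_rel * η uK →
      (∀ v ∈ K, ∀ w ∈ K, |η v - η w| ≤ C_stab * ‖v - w‖) →
      ∀ w u' u u_prev : X, w ∈ K → u' ∈ K → u ∈ K → u_prev ∈ K →
      ‖uK - u'‖ ≤ q_Pic * ‖uK - w‖ →
      ‖u' - u‖ ≤ q_alg * ‖u' - u_prev‖ →
      ‖ustar - u‖ ≤ C' * (η u + ‖u - w‖ + ‖u - u_prev‖) := by
  have hDa : (0:ℝ) < 1 - q_alg := by linarith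
  have hDp : (0:ℝ) < 1 - q_Pic := by linarith
  have hD : (0:ℝ) < (1 - q_alg) * (1 - q_Pic) := mul_pos hDa hDp
  refine ⟨(C_rel * C_stab + C_rel + 1) / ((1 - q_alg) * (1 - q_Pic)), ?_, ?_⟩
  · apply div_pos (by nlinarith) hD
  intro X _ _ _ A f α L hα hαL hmono hlip ustar hustar K hK uK huK hGal η hη hrel hstab
    w u' u u_prev hw hu' hu huprev hPic halg
  have hkuK : η uK ≤ η u + C_stab * ‖uK - u‖ := by
    have := hstab uK huK u hu
    have := abs_le.mp this
    linarith [this.2]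
  have t1 : ‖ustar - u‖ ≤ ‖ustar - uK‖ + ‖uK - u‖ := norm_sub_le_norm_sub_add_norm_sub _ _ _
  have t2 : ‖uK - u‖ ≤ ‖uK - u'‖ + ‖u' - u‖ := norm_sub_le_norm_sub_add_norm_sub _ _ _
  have t3 : ‖uK - w‖ ≤ ‖uK - u‖ + ‖u - w‖ := norm_sub_le_norm_sub_add_norm_sub _ _ _
  have t4 : ‖u' - u_prev‖ ≤ ‖u' - u‖ + ‖u - u_prev‖ := norm_sub_le_norm_sub_add_norm_sub _ _ _
  have hn : 0 ≤ η u := hη u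
  have n1 : (0:ℝ) ≤ ‖uK - u‖ := norm_nonneg _
  have n2 : (0:ℝ) ≤ ‖u - w‖ := norm_nonneg _
  have n3 : (0:ℝ) ≤ ‖u - u_prev‖ := norm_nonneg _
  have n4 : (0:ℝ) ≤ ‖u' - u_prev‖ := norm_nonneg _
  have n5 : (0:ℝ) ≤ ‖uK - w‖ := norm_nonneg _
  -- algebraic: (1-q_alg)‖u'-u‖ ≤ q_alg ‖u-u_prev‖
  have ha : (1 - q_alg) * ‖u' - u‖ ≤ q_alg * ‖u - u_prev‖ := by nlinarith
  -- (1-q_Pic)‖uK-u‖ ≤ q_Pic ‖u-w‖ + ‖u'-u‖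
  have hk : (1 - q_Pic) * ‖uK - u‖ ≤ q_Pic * ‖u - w‖ + ‖u' - u‖ := by nlinarith
  have hDk : (1 - q_alg) * (1 - q_Pic) * ‖uK - u‖ ≤ ‖u - w‖ + ‖u - u_prev‖ := by
    have h1 := mul_le_mul_of_nonneg_left hk hDa.le
    nlinarith [mul_nonneg n2 (by nlinarith : (0:ℝ) ≤ 1 - (1 - q_alg) * q_Pic),
      mul_nonneg n3 hqalg0.le]
  have hs : ‖ustar - u‖ ≤ C_rel * η u + (C_rel * C_stab + 1) * ‖uK - u‖ := by
    have hrm := mul_le_mul_of_nonneg_left hkuK hCrel.le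
    ring_nf at hrm ⊢
    linarith
  have hD1 : (1 - q_alg) * (1 - q_Pic) ≤ 1 := by nlinarith
  have hsnn : (0:ℝ) ≤ ‖ustar - u‖ := norm_nonneg _
  rw [div_mul_eq_mul_div, le_div_iff₀ hD]
  nlinarith [mul_le_mul_of_nonneg_right hs hD.le,
    mul_le_mul_of_nonneg_left hDk (by positivity : (0:ℝ) ≤ C_rel * C_stab + 1),
    mul_nonneg (mul_nonneg hCrel.le hn) (sub_nonneg.mpr hD1),
    mul_nonneg hCrel.le n2, mul_nonneg hCrel.le n3,
    mul_nonneg (mul_nonneg hCrel.le hCstab.le) hn]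
end

section
/- Reliability at the final iterates: There exists a constant C' > 0, depending only on C_rel, C_stab, q_alg, λ_alg, q_Pic, and λ_Pic, such that the following holds. Let 0 < q_alg < 1, 0 < q_Pic < 1, λ_alg > 0, λ_Pic > 0, and let w, u', u, u_prev ∈ X_ℓ satisfy (i) ‖u_ℓ⋆ − u'‖ ≤ q_Pic·‖u_ℓ⋆ − w‖; (ii) ‖u' − u‖ ≤ q_alg·‖u' − u_prev‖; (iii) ‖u − u_prev‖ ≤ λ_alg·(η(u) + ‖u − w‖) (algebraic stopping criterion); (iv) ‖u − w‖ ≤ λ_Pic·η(u) (linearization stopping criterion). Then ‖u⋆ − u‖ ≤ C'·η(u). -/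
open RealInnerProductSpace

/-- Reliability at the final iterates (Proposition 2.2, third case): there is a constant
`C' > 0`, depending only on `C_rel`, `C_stab`, `q_alg`, `λ_alg`, `q_Pic`, and `λ_Pic`, such
that for any strongly monotone and Lipschitz problem, any closed subspace with Galerkin
solution `uK`, any reliable and stable estimator `η`, and any iterates `w, u', u, u_prev`
satisfying the Picard contraction, the algebraic contraction, and both stopping criteria,
one has `‖u⋆ − u‖ ≤ C' η(u)`. -/
theorem stmt_10 (C_rel C_stab q_alg q_Pic lamAlg lamPic : ℝ)
    (hCrel : 0 < C_rel) (hCstab : 0 < C_stab)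
    (hqalg0 : 0 < q_alg) (hqalg1 : q_alg < 1)
    (hqPic0 : 0 < q_Pic) (hqPic1 : q_Pic < 1)
    (hlamAlg : 0 < lamAlg) (hlamPic : 0 < lamPic) :
    ∃ C' : ℝ, 0 < C' ∧
      ∀ (X : Type) [NormedAddCommGroup X] [InnerProductSpace ℝ X] [CompleteSpace X],
      ∀ (A : X → X) (f : X) (α L : ℝ), 0 < α → α ≤ L →
      (∀ v w : X, α * ‖w - v‖ ^ 2 ≤ ⟪A w - A v, w - v⟫) →
      (∀ v w : X, ‖A w - A v‖ ≤ L * ‖w - v‖) →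
      ∀ ustar : X, (∀ v : X, ⟪A ustar, v⟫ = ⟪f, v⟫) →
      ∀ K : Submodule ℝ X, IsClosed (K : Set X) →
      ∀ uK : X, uK ∈ K → (∀ v ∈ K, ⟪A uK, v⟫ = ⟪f, v⟫) →
      ∀ η : X → ℝ, (∀ v : X, 0 ≤ η v) →
      ‖ustar - uK‖ ≤ C_rel * η uK →
      (∀ v ∈ K, ∀ w ∈ K, |η v - η w| ≤ C_stab * ‖v - w‖) →
      ∀ w u' u u_prev : X, w ∈ K → u' ∈ K → u ∈ K → u_prev ∈ K →
      ‖uK - u'‖ ≤ q_Pic * ‖uK - w‖ →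
      ‖u' - u‖ ≤ q_alg * ‖u' - u_prev‖ →
      ‖u - u_prev‖ ≤ lamAlg * (η u + ‖u - w‖) →
      ‖u - w‖ ≤ lamPic * η u →
      ‖ustar - u‖ ≤ C' * η u := by
  set D : ℝ := (q_Pic * lamPic + q_alg * lamAlg * (1 + lamPic) / (1 - q_alg)) / (1 - q_Pic)
    with hD
  have hq1 : 0 < 1 - q_alg := by linarith
  have hq2 : 0 < 1 - q_Pic := by linarith
  have hDpos : 0 < D := by
    apply div_pos _ hq2
    have : 0 < q_alg * lamAlg * (1 + lamPic) / (1 - q_alg) := by positivity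
    nlinarith
  refine ⟨C_rel + (C_rel * C_stab + 1) * D, by positivity, ?_⟩
  intro X _ _ _ A f α L hα hαL hmono hlip ustar hustar K hK uK huK hGal η hη hrel hstab
    w u' u u_prev hwK hu'K huK' hupK hPic halg hstopA hstopP
  have he : 0 ≤ η u := hη u
  -- bound ‖u' - u_prev‖
  have h1 : ‖u' - u_prev‖ * (1 - q_alg) ≤ lamAlg * (1 + lamPic) * η u := by
    have ht : ‖u' - u_prev‖ ≤ ‖u' - u‖ + ‖u - u_prev‖ := norm_sub_le_norm_sub_add_norm_sub _ _ _
    nlinarith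
  -- bound ‖uK - u‖
  have h2 : ‖uK - u‖ * (1 - q_Pic) ≤ (q_Pic * lamPic + q_alg * lamAlg * (1 + lamPic) / (1 - q_alg)) * η u := by
    have ht1 : ‖uK - u‖ ≤ ‖uK - u'‖ + ‖u' - u‖ := norm_sub_le_norm_sub_add_norm_sub _ _ _
    have ht2 : ‖uK - w‖ ≤ ‖uK - u‖ + ‖u - w‖ := norm_sub_le_norm_sub_add_norm_sub _ _ _
    have h1' : ‖u' - u_prev‖ ≤ lamAlg * (1 + lamPic) * η u / (1 - q_alg) := by
      rw [le_div_iff₀ hq1]; linarith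
    have : q_alg * ‖u' - u_prev‖ ≤ q_alg * (lamAlg * (1 + lamPic) * η u / (1 - q_alg)) :=
      mul_le_mul_of_nonneg_left h1' hqalg0.le
    have heq : q_alg * (lamAlg * (1 + lamPic) * η u / (1 - q_alg))
        = q_alg * lamAlg * (1 + lamPic) / (1 - q_alg) * η u := by ring
    nlinarith
  have h3 : ‖uK - u‖ ≤ D * η u := by
    rw [hD, div_mul_eq_mul_div, le_div_iff₀ hq2]; linarith
  have hstab' : η uK ≤ η u + C_stab * ‖uK - u‖ := by
    have := hstab uK huK u huK'
    have := abs_le.mp this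
    linarith [this.1, this.2]
  have ht : ‖ustar - u‖ ≤ ‖ustar - uK‖ + ‖uK - u‖ := norm_sub_le_norm_sub_add_norm_sub _ _ _
  have hrel' : ‖ustar - uK‖ ≤ C_rel * (η u + C_stab * ‖uK - u‖) :=
    hrel.trans (mul_le_mul_of_nonneg_left hstab' hCrel.le)
  nlinarith [mul_le_mul_of_nonneg_left h3 (mul_pos hCrel hCstab).le]
end

section
/- Linear convergence from uniform tail summability: Let C > 0 and let (a_n)_{n∈ℕ} be a sequence of nonnegative real numbers such that ∑_{n=N+1}^{M} a_n ≤ C·a_N for all natural numbers N ≤ M. Then for all N, m ∈ ℕ: a_{N+m} ≤ (1 + C)·(C/(C + 1))^m·a_N; i.e., the sequence converges linearly with constant C_lin := 1 + C and rate q_lin := C/(C + 1) < 1. -/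
/-- Linear convergence from uniform tail summability (Step 1 of the proof of Theorem 2.4):
if `∑_{n=N+1}^{M} a_n ≤ C a_N` for all `N ≤ M`, then
`a_{N+m} ≤ (1 + C) (C/(C+1))^m a_N` for all `N, m`. -/
theorem stmt_13 (C : ℝ) (hC : 0 < C) (a : ℕ → ℝ) (ha : ∀ n : ℕ, 0 ≤ a n)
    (h : ∀ N M : ℕ, N ≤ M → ∑ n ∈ Finset.Icc (N + 1) M, a n ≤ C * a N) :
    ∀ N m : ℕ, a (N + m) ≤ (1 + C) * (C / (C + 1)) ^ m * a N := by
  intro N m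
  have hC1 : (0:ℝ) < C + 1 := by linarith
  set q : ℝ := C / (C + 1) with hq
  have hq0 : 0 ≤ q := by positivity
  have split : ∀ k, k ≤ m →
      ∑ n ∈ Finset.Icc (N + k) (N + m), a n
        = a (N + k) + ∑ n ∈ Finset.Icc (N + k + 1) (N + m), a n := by
    intro k hk
    rw [Finset.Icc_eq_cons_Ioc (by omega), Finset.sum_cons, ← Finset.Icc_add_one_left_eq_Ioc]
  have key : ∀ k, k ≤ m →
      ∑ n ∈ Finset.Icc (N + k) (N + m), a n ≤ q ^ k * ((1 + C) * a N) := by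
    intro k
    induction k with
    | zero =>
      intro _
      have h1 := h N (N + m) (by omega)
      have h2 := split 0 (by omega)
      simp only [Nat.add_zero] at h2 ⊢
      rw [pow_zero, one_mul, h2]
      nlinarith [ha N]
    | succ k ih =>
      intro hk
      have hk' : k ≤ m := by omega
      have h1 := ih hk'
      have h2 := split k hk'
      have h3 : ∑ n ∈ Finset.Icc (N + k + 1) (N + m), a n ≤ C * a (N + k) :=
        h (N + k) (N + m) (by omega)
      set s1 : ℝ := ∑ n ∈ Finset.Icc (N + k + 1) (N + m), a n with hs1
      have h4 : s1 ≤ q * ∑ n ∈ Finset.Icc (N + k) (N + m), a n := by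
        rw [h2, hq]
        rw [div_mul_eq_mul_div, le_div_iff₀ hC1]
        nlinarith
      have h5 : q * ∑ n ∈ Finset.Icc (N + k) (N + m), a n ≤ q * (q ^ k * ((1 + C) * a N)) :=
        mul_le_mul_of_nonneg_left h1 hq0
      have heq : (N + (k + 1)) = N + k + 1 := by omega
      rw [heq]
      calc s1 ≤ q * (q ^ k * ((1 + C) * a N)) := le_trans h4 h5
        _ = q ^ (k + 1) * ((1 + C) * a N) := by ring
  have hfin := key m le_rfl
  have : ∑ n ∈ Finset.Icc (N + m) (N + m), a n = a (N + m) := by simp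
  rw [this] at hfin
  linarith [hfin, le_of_eq (show (1 + C) * q ^ m * a N = q ^ m * ((1 + C) * a N) by ring)]
end

section
/- Optimal rate with respect to cumulative cost from optimal rate and linear convergence: Let s > 0, C_lin ≥ 1, 0 < q_lin < 1, C ≥ 0. Let (Δ_n) be a sequence of positive real numbers with Δ_n ≤ C_lin·q_lin^{n−m}·Δ_m for all natural numbers m ≤ n (linear convergence), and let (T_n) be a sequence of nonnegative real numbers with T_m ≤ C·Δ_m^{−1/s} for all m (rate s with respect to the individual cost T_m). Then for every n ∈ ℕ: (∑_{m=0}^{n} T_m)^s·Δ_n ≤ C^s·C_lin·(1 − q_lin^{1/s})^{−s}; i.e., the quasi-error Δ_n decays with rate s also with respect to the cumulative cost ∑_{m=0}^{n} T_m. -/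
/-- Optimal rate with respect to the cumulative cost (Theorem 2.7, abstract core): if the
quasi-errors `Δ_n` converge linearly, `Δ_n ≤ C_lin q_lin^{n−m} Δ_m` for `m ≤ n`, and the
individual costs satisfy `T_m ≤ C Δ_m^{−1/s}`, then
`(∑_{m=0}^{n} T_m)^s Δ_n ≤ C^s C_lin (1 − q_lin^{1/s})^{−s}` for all `n`. -/
theorem stmt_16 (s C_lin q_lin C : ℝ) (hs : 0 < s) (hClin : 1 ≤ C_lin)
    (hq0 : 0 < q_lin) (hq1 : q_lin < 1) (hC : 0 ≤ C)
    (Δ : ℕ → ℝ) (hΔ : ∀ n : ℕ, 0 < Δ n)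
    (hlin : ∀ m n : ℕ, m ≤ n → Δ n ≤ C_lin * q_lin ^ (n - m) * Δ m)
    (T : ℕ → ℝ) (hT : ∀ m : ℕ, 0 ≤ T m)
    (hrate : ∀ m : ℕ, T m ≤ C * Δ m ^ (-(1 / s) : ℝ)) :
    ∀ n : ℕ, (∑ m ∈ Finset.range (n + 1), T m) ^ s * Δ n ≤
      C ^ s * C_lin * ((1 - q_lin ^ ((1 / s) : ℝ))⁻¹) ^ s := by
  intro n
  set r : ℝ := q_lin ^ ((1 / s) : ℝ) with hr
  have hr0 : 0 < r := Real.rpow_pos_of_pos hq0 _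
  have hr1 : r < 1 := Real.rpow_lt_one hq0.le hq1 (by positivity)
  have hClin0 : (0 : ℝ) < C_lin := lt_of_lt_of_le one_pos hClin
  set K : ℝ := C * C_lin ^ ((1 / s) : ℝ) * Δ n ^ (-(1 / s) : ℝ) with hK
  have hK0 : 0 ≤ K := by
    have := (Real.rpow_pos_of_pos (hΔ n) (-(1 / s) : ℝ)).le
    have := (Real.rpow_pos_of_pos hClin0 ((1 / s) : ℝ)).le
    positivity
  have key : ∀ m ∈ Finset.range (n + 1), T m ≤ K * r ^ (n - m) := by
    intro m hm
    have hmn : m ≤ n := Nat.lt_succ_iff.mp (Finset.mem_range.mp hm)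
    have hq_pow : ((q_lin ^ (n - m) : ℝ)) ^ ((1 / s) : ℝ) = r ^ (n - m) := by
      rw [← Real.rpow_natCast q_lin (n - m), ← Real.rpow_natCast r (n - m), hr,
        ← Real.rpow_mul hq0.le, ← Real.rpow_mul hq0.le]
      ring_nf
    have h2 : Δ n ^ ((1 / s) : ℝ) ≤ (C_lin ^ ((1 / s) : ℝ) * r ^ (n - m)) * Δ m ^ ((1 / s) : ℝ) := by
      calc Δ n ^ ((1 / s) : ℝ) ≤ (C_lin * q_lin ^ (n - m) * Δ m) ^ ((1 / s) : ℝ) :=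
            Real.rpow_le_rpow (hΔ n).le (hlin m n hmn) (by positivity)
        _ = (C_lin ^ ((1 / s) : ℝ) * r ^ (n - m)) * Δ m ^ ((1 / s) : ℝ) := by
            rw [Real.mul_rpow (by positivity) (hΔ m).le,
              Real.mul_rpow hClin0.le (by positivity), hq_pow]
    have hA : 0 < Δ m ^ ((1 / s) : ℝ) := Real.rpow_pos_of_pos (hΔ m) _
    have hB : 0 < Δ n ^ ((1 / s) : ℝ) := Real.rpow_pos_of_pos (hΔ n) _
    have h3 : (Δ m ^ ((1 / s) : ℝ))⁻¹
        ≤ (C_lin ^ ((1 / s) : ℝ) * r ^ (n - m)) * (Δ n ^ ((1 / s) : ℝ))⁻¹ := by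
      have h4 := mul_le_mul_of_nonneg_right h2
        (show (0 : ℝ) ≤ (Δ m ^ ((1 / s) : ℝ))⁻¹ * (Δ n ^ ((1 / s) : ℝ))⁻¹ by positivity)
      calc (Δ m ^ ((1 / s) : ℝ))⁻¹
          = Δ n ^ ((1 / s) : ℝ) * ((Δ m ^ ((1 / s) : ℝ))⁻¹ * (Δ n ^ ((1 / s) : ℝ))⁻¹) := by
            field_simp
        _ ≤ (C_lin ^ ((1 / s) : ℝ) * r ^ (n - m)) * Δ m ^ ((1 / s) : ℝ) *
            ((Δ m ^ ((1 / s) : ℝ))⁻¹ * (Δ n ^ ((1 / s) : ℝ))⁻¹) := h4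
        _ = (C_lin ^ ((1 / s) : ℝ) * r ^ (n - m)) * (Δ n ^ ((1 / s) : ℝ))⁻¹ := by
            field_simp
    calc T m ≤ C * Δ m ^ (-(1 / s) : ℝ) := hrate m
      _ = C * (Δ m ^ ((1 / s) : ℝ))⁻¹ := by rw [Real.rpow_neg (hΔ m).le]
      _ ≤ C * ((C_lin ^ ((1 / s) : ℝ) * r ^ (n - m)) * (Δ n ^ ((1 / s) : ℝ))⁻¹) :=
          mul_le_mul_of_nonneg_left h3 hC
      _ = K * r ^ (n - m) := by
          rw [hK, Real.rpow_neg (hΔ n).le]; ring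
  have hgeom : ∑ m ∈ Finset.range (n + 1), r ^ (n - m) ≤ (1 - r)⁻¹ := by
    have hrefl : ∑ m ∈ Finset.range (n + 1), r ^ (n - m)
        = ∑ k ∈ Finset.range (n + 1), r ^ k := by
      have := Finset.sum_range_reflect (fun k => r ^ k) (n + 1)
      simpa using this
    rw [hrefl, geom_sum_eq hr1.ne (n + 1)]
    have h5 : 0 ≤ r ^ (n + 1) := by positivity
    have h6 : 0 < 1 - r := by linarith
    have h7 : (r ^ (n + 1) - 1) / (r - 1) = (1 - r ^ (n + 1)) / (1 - r) := by
      rw [← neg_div_neg_eq]; ring_nf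
    rw [h7, div_le_iff₀ h6, inv_mul_cancel₀ h6.ne']
    linarith
  have hsum : ∑ m ∈ Finset.range (n + 1), T m ≤ K * (1 - r)⁻¹ := by
    calc ∑ m ∈ Finset.range (n + 1), T m ≤ ∑ m ∈ Finset.range (n + 1), K * r ^ (n - m) :=
          Finset.sum_le_sum key
      _ = K * ∑ m ∈ Finset.range (n + 1), r ^ (n - m) := by rw [Finset.mul_sum]
      _ ≤ K * (1 - r)⁻¹ := mul_le_mul_of_nonneg_left hgeom hK0
  have hsum0 : 0 ≤ ∑ m ∈ Finset.range (n + 1), T m := Finset.sum_nonneg fun m _ => hT m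
  have hrs : (∑ m ∈ Finset.range (n + 1), T m) ^ s ≤ (K * (1 - r)⁻¹) ^ s :=
    Real.rpow_le_rpow hsum0 hsum hs.le
  have hfinal : (K * (1 - r)⁻¹) ^ s * Δ n = C ^ s * C_lin * ((1 - r)⁻¹) ^ s := by
    have h6 : 0 < 1 - r := by linarith
    rw [hK, Real.mul_rpow (by positivity) (by positivity),
      Real.mul_rpow (by positivity) (Real.rpow_pos_of_pos (hΔ n) _).le,
      Real.mul_rpow hC (by positivity),
      ← Real.rpow_mul hClin0.le, ← Real.rpow_mul (hΔ n).le,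
      one_div_mul_cancel hs.ne', Real.rpow_one]
    have h7 : -(1 / s) * s = -1 := by field_simp
    rw [h7, Real.rpow_neg_one]
    field_simp
    rw [mul_div_assoc, div_self (hΔ n).ne', mul_one]
  calc (∑ m ∈ Finset.range (n + 1), T m) ^ s * Δ n ≤ (K * (1 - r)⁻¹) ^ s * Δ n :=
        mul_le_mul_of_nonneg_right hrs (hΔ n).le
    _ = C ^ s * C_lin * ((1 - r)⁻¹) ^ s := hfinal
end

section
/- Let d ≥ 1 and let μ : [0,∞) → ℝ be continuously differentiable with γ₁ ≤ μ(t) + 2·t·μ'(t) ≤ γ₂ for all t ≥ 0, where 0 < γ₁ ≤ γ₂. Define A : ℝ^d → ℝ^d by A(a) := μ(|a|²)·a. Then for all a, b ∈ ℝ^d: γ₁·|a − b|² ≤ ⟨A(a) − A(b), a − b⟩ and |A(a) − A(b)| ≤ γ₂·|a − b|; i.e., A is strongly monotone with constant γ₁ and Lipschitz continuous with constant γ₂. -/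
/-!
Put `c = (γ₁ + γ₂) / 2` and `L = (γ₂ - γ₁) / 2`, so that the hypothesis reads
`|μ t + 2 t μ' t - c| ≤ L`. Since `s ↦ s μ(s²)` has derivative `μ(s²) + 2 s² μ'(s²)` and vanishes
at `0`, the mean value inequality also gives `|μ t - c| ≤ L`. The derivative of `A` at `x` is
`h ↦ μ(t) h + 2 μ'(t) ⟪x, h⟫ x` with `t = |x|²`, which acts as `μ(t)` on `x^⊥` and as
`μ(t) + 2 t μ'(t)` on `x`; so `DA - c • id` has operator norm at most `L`, and by the mean value
inequality `A - c • id` is `L`-Lipschitz. Both claims follow from `c - L = γ₁` and `c + L = γ₂`.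
-/

open RealInnerProductSpace Set

section Scalar

variable {μ μ' : ℝ → ℝ}

theorem hasDerivWithinAt_mul_comp_sq
    (hμ : ∀ t ∈ Ici (0 : ℝ), HasDerivWithinAt μ (μ' t) (Ici 0) t) {r : ℝ} :
    HasDerivWithinAt (fun s => s * μ (s ^ 2)) (μ (r ^ 2) + 2 * r ^ 2 * μ' (r ^ 2)) (Ici 0) r := by
  have hsq : HasDerivWithinAt (fun s : ℝ => s ^ 2) (2 * r) (Ici 0) r := by
    simpa using (hasDerivAt_pow 2 r).hasDerivWithinAt
  have hcomp := HasDerivWithinAt.comp (h := fun s : ℝ => s ^ 2) r (hμ (r ^ 2) (sq_nonneg r)) hsq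
    fun s _ => sq_nonneg s
  exact ((hasDerivWithinAt_id r _).mul hcomp).congr_deriv (by simp only [Function.comp, id]; ring)

theorem abs_sub_le_of_abs_add_two_mul_deriv_sub_le {c L : ℝ}
    (hμ : ∀ t ∈ Ici (0 : ℝ), HasDerivWithinAt μ (μ' t) (Ici 0) t)
    (hbound : ∀ t ∈ Ici (0 : ℝ), |μ t + 2 * t * μ' t - c| ≤ L) :
    ∀ t ∈ Ici (0 : ℝ), |μ t - c| ≤ L := by
  intro t ht
  rcases (mem_Ici.1 ht).eq_or_lt with rfl | ht
  · simpa using hbound 0 self_mem_Ici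
  set s := √t
  have hs : 0 < s := Real.sqrt_pos.2 ht
  have hmvt := (convex_Ici (0 : ℝ)).norm_image_sub_le_of_norm_hasDerivWithin_le
    (fun r _ => (hasDerivWithinAt_mul_comp_sq hμ).sub ((hasDerivWithinAt_id r _).const_mul c))
    (fun r _ => by simpa using hbound (r ^ 2) (sq_nonneg r)) self_mem_Ici hs.le
  have hst : s ^ 2 = t := Real.sq_sqrt ht.le
  have : s * |μ t - c| ≤ s * L := by
    simpa [hst, Real.norm_eq_abs, mul_comm c, ← mul_sub, abs_mul, abs_of_pos hs, mul_comm L]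
      using hmvt
  exact le_of_mul_le_mul_left this hs

end Scalar

section VectorField

variable {E : Type*} [NormedAddCommGroup E] [InnerProductSpace ℝ E]

theorem sub_mul_norm_sq_le_inner_of_norm_sub_smul_le {v w : E} {c L : ℝ}
    (h : ‖w - c • v‖ ≤ L * ‖v‖) : (c - L) * ‖v‖ ^ 2 ≤ ⟪w, v⟫ := by
  have hsplit : ⟪w, v⟫ = ⟪w - c • v, v⟫ + c * ‖v‖ ^ 2 := by
    rw [inner_sub_left, real_inner_smul_left, real_inner_self_eq_norm_sq]
    ring
  have hcs := neg_le_of_abs_le (abs_real_inner_le_norm (w - c • v) v)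
  nlinarith [norm_nonneg v]

theorem norm_le_add_mul_of_norm_sub_smul_le {v w : E} {c L : ℝ} (hc : 0 ≤ c)
    (h : ‖w - c • v‖ ≤ L * ‖v‖) : ‖w‖ ≤ (c + L) * ‖v‖ :=
  calc ‖w‖ ≤ ‖w - c • v‖ + ‖c • v‖ := norm_le_norm_sub_add w (c • v)
    _ ≤ L * ‖v‖ + c * ‖v‖ := by rw [norm_smul, Real.norm_of_nonneg hc]; gcongr
    _ = (c + L) * ‖v‖ := by ring

theorem norm_smul_add_inner_smul_le {P m L : ℝ} (x h : E) (hP : |P| ≤ L)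
    (hPm : |P + m * ‖x‖ ^ 2| ≤ L) : ‖P • h + (m * ⟪x, h⟫) • x‖ ≤ L * ‖h‖ := by
  have hL : 0 ≤ L := (abs_nonneg P).trans hP
  set q := ⟪x, h⟫
  set t := ‖x‖ ^ 2
  have hq : q ^ 2 ≤ t * ‖h‖ ^ 2 := by
    rw [← mul_pow, ← sq_abs]
    exact pow_le_pow_left₀ (abs_nonneg q) (abs_real_inner_le_norm x h) 2
  have hexpand :
      ‖P • h + (m * q) • x‖ ^ 2 = P ^ 2 * ‖h‖ ^ 2 + q ^ 2 * (2 * P * m + m ^ 2 * t) := by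
    rw [norm_add_sq_real, real_inner_smul_left, real_inner_smul_right, norm_smul, norm_smul,
      real_inner_comm, Real.norm_eq_abs, Real.norm_eq_abs, mul_pow, mul_pow, sq_abs, sq_abs]
    ring
  have hP2 : P ^ 2 ≤ L ^ 2 := sq_le_sq' (abs_le.1 hP).1 (abs_le.1 hP).2
  have hPm2 : (P + m * t) ^ 2 ≤ L ^ 2 := sq_le_sq' (abs_le.1 hPm).1 (abs_le.1 hPm).2
  -- `t (2 P m + m² t) = (P + m t)² - P²`, and `q² ≤ t ‖h‖²` by Cauchy–Schwarz
  have hsq : ‖P • h + (m * q) • x‖ ^ 2 ≤ (L * ‖h‖) ^ 2 := by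
    rw [hexpand]
    rcases le_or_gt (2 * P * m + m ^ 2 * t) 0 with hk | hk
    · nlinarith [sq_nonneg q, sq_nonneg ‖h‖]
    · nlinarith [sq_nonneg q, sq_nonneg ‖h‖, mul_le_mul_of_nonneg_right hq hk.le]
  exact le_of_pow_le_pow_left₀ two_ne_zero (mul_nonneg hL (norm_nonneg h)) hsq

variable {μ μ' : ℝ → ℝ}

theorem hasFDerivAt_smul_comp_norm_sq
    (hμ : ∀ t ∈ Ici (0 : ℝ), HasDerivWithinAt μ (μ' t) (Ici 0) t) (x : E) :
    HasFDerivAt (fun y : E => μ (‖y‖ ^ 2) • y)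
      (μ (‖x‖ ^ 2) • ContinuousLinearMap.id ℝ E
        + (2 * μ' (‖x‖ ^ 2)) • (innerSL ℝ x).smulRight x) x := by
  have hnorm : HasFDerivWithinAt (fun y : E => μ (‖y‖ ^ 2)) (μ' (‖x‖ ^ 2) • (2 • innerSL ℝ x))
      univ x :=
    (hμ _ (mem_Ici.2 (sq_nonneg _))).comp_hasFDerivWithinAt x
      (hasStrictFDerivAt_norm_sq x).hasFDerivAt.hasFDerivWithinAt fun y _ => sq_nonneg ‖y‖
  rw [← hasFDerivWithinAt_univ]
  refine (hnorm.smul (hasFDerivWithinAt_id x univ)).congr_fderiv ?_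
  ext h
  simp only [add_apply, smul_apply, ContinuousLinearMap.id_apply,
    ContinuousLinearMap.smulRight_apply, coe_innerSL_apply, id]
  module

theorem norm_smul_comp_norm_sq_sub_sub_smul_le {c L : ℝ}
    (hμ : ∀ t ∈ Ici (0 : ℝ), HasDerivWithinAt μ (μ' t) (Ici 0) t)
    (hbound : ∀ t ∈ Ici (0 : ℝ), |μ t + 2 * t * μ' t - c| ≤ L) (a b : E) :
    ‖μ (‖a‖ ^ 2) • a - μ (‖b‖ ^ 2) • b - c • (a - b)‖ ≤ L * ‖a - b‖ := by
  have hμc := abs_sub_le_of_abs_add_two_mul_deriv_sub_le hμ hbound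
  refine convex_univ.norm_image_sub_le_of_norm_hasFDerivWithin_le'
    (φ := c • ContinuousLinearMap.id ℝ E)
    (fun x _ => (hasFDerivAt_smul_comp_norm_sq hμ x).hasFDerivWithinAt) (fun x _ => ?_)
    (mem_univ b) (mem_univ a)
  refine ContinuousLinearMap.opNorm_le_bound _ ((abs_nonneg _).trans (hμc 0 self_mem_Ici))
    fun h => ?_
  set t := ‖x‖ ^ 2
  have happly : (μ t • ContinuousLinearMap.id ℝ E + (2 * μ' t) • (innerSL ℝ x).smulRight x
      - c • ContinuousLinearMap.id ℝ E) h = (μ t - c) • h + (2 * μ' t * ⟪x, h⟫) • x := by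
    simp only [sub_apply, add_apply, smul_apply, ContinuousLinearMap.id_apply,
      ContinuousLinearMap.smulRight_apply, coe_innerSL_apply]
    module
  rw [happly]
  refine norm_smul_add_inner_smul_le x h (hμc _ (mem_Ici.2 (sq_nonneg _))) ?_
  convert hbound t (mem_Ici.2 (sq_nonneg _)) using 2
  ring

end VectorField

theorem stmt_18_general (d : ℕ) (μ μ' : ℝ → ℝ) (γ₁ γ₂ : ℝ)
    (hγ₁ : 0 < γ₁) (hγ₁₂ : γ₁ ≤ γ₂)
    (hdiff : ∀ t ∈ Set.Ici (0 : ℝ), HasDerivWithinAt μ (μ' t) (Set.Ici (0 : ℝ)) t)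
    (hbound : ∀ t ∈ Set.Ici (0 : ℝ),
      γ₁ ≤ μ t + 2 * t * μ' t ∧ μ t + 2 * t * μ' t ≤ γ₂)
    (A : EuclideanSpace ℝ (Fin d) → EuclideanSpace ℝ (Fin d))
    (hA : ∀ a : EuclideanSpace ℝ (Fin d), A a = μ (‖a‖ ^ 2) • a) :
    ∀ a b : EuclideanSpace ℝ (Fin d),
      γ₁ * ‖a - b‖ ^ 2 ≤ ⟪A a - A b, a - b⟫ ∧ ‖A a - A b‖ ≤ γ₂ * ‖a - b‖ := by
  intro a b
  have hmid : ∀ t ∈ Ici (0 : ℝ), |μ t + 2 * t * μ' t - (γ₁ + γ₂) / 2| ≤ (γ₂ - γ₁) / 2 :=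
    fun t ht => abs_le.2 ⟨by linarith [(hbound t ht).1], by linarith [(hbound t ht).2]⟩
  have hshift := norm_smul_comp_norm_sq_sub_sub_smul_le hdiff hmid a b
  rw [← hA, ← hA] at hshift
  constructor
  · convert sub_mul_norm_sq_le_inner_of_norm_sub_smul_le hshift using 2
    ring
  · convert norm_le_add_mul_of_norm_sub_smul_le (by linarith) hshift using 2
    ring

/-- Strong monotonicity and Lipschitz continuity of the vector field `A(a) = μ(|a|²) a`
under the structural assumption `γ₁ ≤ μ(t) + 2 t μ'(t) ≤ γ₂` on `[0, ∞)` for a continuously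
differentiable scalar nonlinearity `μ`. -/
theorem stmt_18 (d : ℕ) (hd : 1 ≤ d) (μ μ' : ℝ → ℝ) (γ₁ γ₂ : ℝ)
    (hγ₁ : 0 < γ₁) (hγ₁₂ : γ₁ ≤ γ₂)
    (hdiff : ∀ t ∈ Set.Ici (0 : ℝ), HasDerivWithinAt μ (μ' t) (Set.Ici (0 : ℝ)) t)
    (hcont : ContinuousOn μ' (Set.Ici (0 : ℝ)))
    (hbound : ∀ t ∈ Set.Ici (0 : ℝ),
      γ₁ ≤ μ t + 2 * t * μ' t ∧ μ t + 2 * t * μ' t ≤ γ₂)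
    (A : EuclideanSpace ℝ (Fin d) → EuclideanSpace ℝ (Fin d))
    (hA : ∀ a : EuclideanSpace ℝ (Fin d), A a = μ (‖a‖ ^ 2) • a) :
    ∀ a b : EuclideanSpace ℝ (Fin d),
      γ₁ * ‖a - b‖ ^ 2 ≤ ⟪A a - A b, a - b⟫ ∧ ‖A a - A b‖ ≤ γ₂ * ‖a - b‖ :=
  stmt_18_general d μ μ' γ₁ γ₂ hγ₁ hγ₁₂ hdiff hbound A hA
end
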